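/- Fix integers k ≥ 1 and n ≥ 3 and signs ε : Fin k → ℤ with ε i ∈ {1, −1} for all i. In the polynomial ring ℤ[v₁, …, v_k], let I be the ideal generated by the elements vᵢvⱼ for i ≠ j together with εᵢvᵢⁿ − εⱼvⱼⁿ for i ≠ j. Then the images of v₁², …, v_k² in the quotient ring ℤ[v₁, …, v_k]/I are linearly independent over ℤ; that is, if c : Fin k → ℤ and Σⱼ cⱼ vⱼ² ∈ I, then cⱼ = 0 for all j. -/

import Mathlib

/-!
Send `X j ↦ t` and every other variable to `0`, landing in `ℤ[t]`. Each product `X i * X i'`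
with `i ≠ i'` dies and each `εᵢ X i ^ n` becomes a multiple of `tⁿ`, so the ideal lands in
`(tⁿ)`, while `∑ cᵢ X i ^ 2` becomes `c j * t²`. As `2 < n`, this forces `c j = 0`.
-/

open MvPolynomial

theorem Polynomial.eq_zero_of_X_pow_dvd_C_mul_X_pow {R : Type*} [Semiring R] {a : R} {m n : ℕ}
    (hmn : m < n) (h : Polynomial.X ^ n ∣ Polynomial.C a * Polynomial.X ^ m) : a = 0 := by
  simpa using Polynomial.X_pow_dvd_iff.mp h m hmn

namespace MvPolynomial

variable {σ R : Type*} [CommSemiring R] [DecidableEq σ] (j : σ)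

theorem aeval_single_X_X_mul_X {i i' : σ} (h : i ≠ i') :
    aeval (Pi.single j (Polynomial.X : Polynomial R)) (X i * X i' : MvPolynomial σ R) = 0 := by
  rcases eq_or_ne i j with rfl | hij
  · simp [Pi.single_eq_of_ne h.symm]
  · simp [Pi.single_eq_of_ne hij]

theorem X_pow_dvd_aeval_single_X_C_mul_X_pow (a : R) (i : σ) (n : ℕ) :
    Polynomial.X ^ n ∣
      aeval (Pi.single j (Polynomial.X : Polynomial R)) (C a * X i ^ n : MvPolynomial σ R) := by
  have hX :
      (Polynomial.X : Polynomial R) ∣ (Pi.single j Polynomial.X : σ → Polynomial R) i := by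
    rcases eq_or_ne i j with rfl | hij
    · simp
    · simp [Pi.single_eq_of_ne hij]
  simpa using dvd_mul_of_dvd_right (pow_dvd_pow_of_dvd hX n) _

theorem aeval_single_X_sum_C_mul_X_pow [Fintype σ] (c : σ → R) {m : ℕ} (hm : m ≠ 0) :
    aeval (Pi.single j (Polynomial.X : Polynomial R)) (∑ i, C (c i) * X i ^ m) =
      Polynomial.C (c j) * Polynomial.X ^ m := by
  rw [map_sum, Finset.sum_eq_single j]
  · simp [Polynomial.C_eq_algebraMap]
  · intro i _ hij
    simp [Pi.single_eq_of_ne hij, zero_pow hm]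
  · simp

end MvPolynomial

theorem stmt2_general (k n : ℕ) (hn : 3 ≤ n)
    (ε : Fin k → ℤ)
    (I : Ideal (MvPolynomial (Fin k) ℤ))
    (hI : I = Ideal.span
      ({p | ∃ i j : Fin k, i ≠ j ∧ p = X i * X j} ∪
       {p | ∃ i j : Fin k, i ≠ j ∧ p = C (ε i) * X i ^ n - C (ε j) * X j ^ n}))
    (c : Fin k → ℤ) (hc : (∑ j, C (c j) * X j ^ 2) ∈ I) :
    ∀ j, c j = 0 := by
  intro j
  have hI_le : I ≤ (Ideal.span {Polynomial.X ^ n}).comap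
      (aeval (Pi.single j (Polynomial.X : Polynomial ℤ))) := by
    rw [hI, Ideal.span_le]
    rintro p (⟨i, i', hii', rfl⟩ | ⟨i, i', -, rfl⟩) <;>
      simp only [SetLike.mem_coe, Ideal.mem_comap, Ideal.mem_span_singleton]
    · simp [aeval_single_X_X_mul_X j hii']
    · rw [map_sub]
      exact dvd_sub (X_pow_dvd_aeval_single_X_C_mul_X_pow j _ i n)
        (X_pow_dvd_aeval_single_X_C_mul_X_pow j _ i' n)
  have hdvd := hI_le hc
  rw [Ideal.mem_comap, aeval_single_X_sum_C_mul_X_pow j c two_ne_zero,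
    Ideal.mem_span_singleton] at hdvd
  exact Polynomial.eq_zero_of_X_pow_dvd_C_mul_X_pow (by omega) hdvd

/-- In `ℤ[v₁,…,v_k]` with `I` generated by `vᵢvⱼ` (`i ≠ j`) and
`εᵢvᵢⁿ − εⱼvⱼⁿ` (`i ≠ j`), `n ≥ 3`, the images of `v₁²,…,v_k²` in the quotient are
linearly independent over ℤ. -/
theorem stmt2 (k n : ℕ) (hk : 1 ≤ k) (hn : 3 ≤ n)
    (ε : Fin k → ℤ) (hε : ∀ i, ε i = 1 ∨ ε i = -1)
    (I : Ideal (MvPolynomial (Fin k) ℤ))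
    (hI : I = Ideal.span
      ({p | ∃ i j : Fin k, i ≠ j ∧ p = X i * X j} ∪
       {p | ∃ i j : Fin k, i ≠ j ∧ p = C (ε i) * X i ^ n - C (ε j) * X j ^ n}))
    (c : Fin k → ℤ) (hc : (∑ j, C (c j) * X j ^ 2) ∈ I) :
    ∀ j, c j = 0 :=
  stmt2_general k n hn ε I hI c hc
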